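/- Consider a two-state continuous-time MDP with S = {1,2}, U = [0,1], rate rows q^u_1 = (-u, u), q^u_2 = (u, -u), discount δ(t) = (e^{-t}+e^{-2t})/2, and rewards g₁(u) = -(7/8)√u, g₂(u) = 19/9 - √(1-u). Then no standard (deterministic feedback) equilibrium exists: for each of the four candidate pairs (a*,b*) ∈ {0,1}², the corresponding best-response condition fails. In particular, V^{(0,0)}(0,1) - V^{(0,0)}(0,2) = -5/6. -/

import Mathlib

open MeasureTheory Real

noncomputable section

/-- Generator of the two-state chain: rate rows `q^a_1 = (-a, a)`, `q^b_2 = (b, -b)`. -/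
def Qgen (a b : ℝ) : Matrix (Fin 2) (Fin 2) ℝ := !![-a, a; b, -b]

/-- The discount function `δ(t) = (e^{-t} + e^{-2t})/2`. -/
def dis19 (t : ℝ) : ℝ := (Real.exp (-t) + Real.exp (-(2 * t))) / 2

/-- Reward in state 1: `g₁(u) = -(7/8)√u`. -/
def g1 (u : ℝ) : ℝ := -(7 / 8) * Real.sqrt u

/-- Reward in state 2: `g₂(u) = 19/9 - √(1-u)`. -/
def g2 (u : ℝ) : ℝ := 19 / 9 - Real.sqrt (1 - u)

/-- `V^{(a,b)}(0,i) = E_i[∫_0^∞ δ(s) g_{X_s}(α(X_s)) ds]` for the stationary standard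
control `α = (a, b)`, computed via the transition semigroup `e^{sQ}`. -/
def Vab (a b : ℝ) (i : Fin 2) : ℝ :=
  ∫ s in Set.Ioi (0 : ℝ),
    dis19 s * ((NormedSpace.exp (s • Qgen a b)).mulVec ![g1 a, g2 b]) i

/-- `(a, b) ∈ [0,1]²` is a standard equilibrium iff `a` maximizes
`a' ↦ g₁(a') - a'(V(0,1) - V(0,2))` and `b` maximizes `b' ↦ g₂(b') + b'(V(0,1) - V(0,2))`,
where `V = V^{(a,b)}`. -/
def IsStdEquilibrium (a b : ℝ) : Prop :=
  a ∈ Set.Icc (0 : ℝ) 1 ∧ b ∈ Set.Icc (0 : ℝ) 1 ∧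
  (∀ a' ∈ Set.Icc (0 : ℝ) 1,
    g1 a' - a' * (Vab a b 0 - Vab a b 1) ≤ g1 a - a * (Vab a b 0 - Vab a b 1)) ∧
  (∀ b' ∈ Set.Icc (0 : ℝ) 1,
    g2 b' + b' * (Vab a b 0 - Vab a b 1) ≤ g2 b + b * (Vab a b 0 - Vab a b 1))

/-! Since `Q := Qgen a b` satisfies `Q * Q = -(a + b) • Q`, the semigroup is
`e^{sQ} = 1 + (1 - e^{-(a+b)s}) / (a + b) • Q`, and `(1, -1)` is a left eigenvector of `Q` for
the eigenvalue `-(a + b)`. Hence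
`V(0,1) - V(0,2) = (g₁(a) - g₂(b)) ∫₀^∞ δ(s) e^{-(a+b)s} ds
  = (g₁(a) - g₂(b)) ((1 + a + b)⁻¹ + (2 + a + b)⁻¹) / 2`.
Both best-response objectives are strictly convex because `-√·` is, so an equilibrium lies in
`{0,1}²`, and at each of the four corners this formula exhibits a profitable deviation to the
other endpoint. -/

open Set Matrix

section Exponential

variable {A : Type*} [Ring A] [Algebra ℝ A] [TopologicalSpace A] [IsTopologicalRing A]
  [ContinuousSMul ℝ A] [T2Space A]

theorem NormedSpace.exp_smul_of_isIdempotentElem {P : A}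
    (hP : IsIdempotentElem P) (t : ℝ) :
    NormedSpace.exp (t • P) = 1 + (Real.exp t - 1) • P := by
  rw [NormedSpace.exp_eq_tsum ℝ]
  have hexp : HasSum (fun n : ℕ => (n.factorial : ℝ)⁻¹ * t ^ n) (Real.exp t) := by
    simpa [Real.exp_eq_exp_ℝ, div_eq_inv_mul] using NormedSpace.expSeries_div_hasSum_exp t
  have hterm : ∀ n : ℕ, (n.factorial : ℝ)⁻¹ • (t • P) ^ n
      = ((n.factorial : ℝ)⁻¹ * t ^ n) • P + if n = 0 then 1 - P else 0 := by
    rintro (_ | n)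
    · simp
    · simp [smul_pow, hP.pow_succ_eq, mul_smul]
  refine HasSum.tsum_eq ?_
  convert (hexp.smul_const P).add (hasSum_ite_eq 0 (1 - P)) using 1
  · exact funext hterm
  · rw [sub_smul, one_smul]; abel

theorem NormedSpace.exp_smul_of_mul_self_eq_smul {Q : A} {μ : ℝ}
    (hμ : μ ≠ 0) (hQ : Q * Q = μ • Q) (t : ℝ) :
    NormedSpace.exp (t • Q) = 1 + ((Real.exp (μ * t) - 1) / μ) • Q := by
  have hP : IsIdempotentElem (μ⁻¹ • Q) := by
    rw [IsIdempotentElem, smul_mul_smul_comm, hQ, smul_smul]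
    field_simp
  have hsmul : t • Q = (μ * t) • μ⁻¹ • Q := by
    rw [smul_smul]; field_simp
  rw [hsmul, NormedSpace.exp_smul_of_isIdempotentElem hP, smul_smul, div_eq_mul_inv]

end Exponential

theorem StrictConvexOn.eq_or_eq_of_isMaxOn {f : ℝ → ℝ} {x y z : ℝ}
    (hf : StrictConvexOn ℝ (Icc x y) f) (hz : z ∈ Icc x y) (hmax : IsMaxOn f (Icc x y) z) :
    z = x ∨ z = y := by
  by_contra! hne
  have hxz : x < z := lt_of_le_of_ne hz.1 (Ne.symm hne.1)
  have hzy : z < y := lt_of_le_of_ne hz.2 hne.2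
  have hx : x ∈ Icc x y := left_mem_Icc.2 (by linarith)
  have hy : y ∈ Icc x y := right_mem_Icc.2 (by linarith)
  have hlt := hf.lt_on_openSegment hx hy (by linarith)
    (by rw [openSegment_eq_Ioo (by linarith)]; exact ⟨hxz, hzy⟩)
  exact (max_le (isMaxOn_iff.1 hmax x hx) (isMaxOn_iff.1 hmax y hy)).not_gt hlt

theorem strictConvexOn_mul_sub_mul_sqrt (m : ℝ) {k : ℝ} (hk : 0 < k) :
    StrictConvexOn ℝ (Ici 0) (fun u => m * u - k * √u) := by
  refine ⟨convex_Ici 0, fun x hx y hy hxy p q hp hq hpq => ?_⟩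
  have hsqrt := mul_lt_mul_of_pos_left (strictConcaveOn_sqrt.2 hx hy hxy hp hq hpq) hk
  simp only [smul_eq_mul] at hsqrt ⊢
  linarith

theorem eq_zero_or_eq_one_of_isMaxOn_mul_sub_mul_sqrt {m k x : ℝ} (hk : 0 < k)
    (hx : x ∈ Icc 0 1) (hmax : ∀ u ∈ Icc (0 : ℝ) 1, m * u - k * √u ≤ m * x - k * √x) :
    x = 0 ∨ x = 1 :=
  ((strictConvexOn_mul_sub_mul_sqrt m hk).subset Icc_subset_Ici_self
    (convex_Icc 0 1)).eq_or_eq_of_isMaxOn hx (isMaxOn_iff.2 hmax)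

theorem Qgen_mul_self (a b : ℝ) : Qgen a b * Qgen a b = (-(a + b)) • Qgen a b := by
  rw [Qgen, mul_fin_two]
  ext i j
  fin_cases i <;> fin_cases j <;>
    simp only [Matrix.smul_apply, of_apply, cons_val', cons_val_zero, cons_val_one,
      cons_val_fin_one, smul_eq_mul, Fin.zero_eta, Fin.mk_one] <;> ring

/-- At `a = b = 0` the coefficient is the junk value `0 / 0 = 0`, harmless as `Qgen 0 0 = 0`. -/
theorem exp_smul_Qgen {a b : ℝ} (ha : 0 ≤ a) (hb : 0 ≤ b) (s : ℝ) :
    NormedSpace.exp (s • Qgen a b)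
      = 1 + ((1 - Real.exp (-(a + b) * s)) / (a + b)) • Qgen a b := by
  rcases (add_nonneg ha hb).eq_or_lt with hab | hab
  · obtain ⟨rfl, rfl⟩ : a = 0 ∧ b = 0 := ⟨by linarith, by linarith⟩
    have hQ : Qgen 0 0 = 0 := by ext i j; fin_cases i <;> fin_cases j <;> simp [Qgen]
    simp [hQ]
  · rw [NormedSpace.exp_smul_of_mul_self_eq_smul (by linarith) (Qgen_mul_self a b), neg_mul,
      div_neg, ← neg_div, neg_sub]

theorem exp_smul_Qgen_mulVec_apply {a b : ℝ} (ha : 0 ≤ a) (hb : 0 ≤ b) (s : ℝ)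
    (g : Fin 2 → ℝ) (i : Fin 2) : (NormedSpace.exp (s • Qgen a b) *ᵥ g) i
      = g i + (1 - Real.exp (-(a + b) * s)) / (a + b) * (Qgen a b *ᵥ g) i := by
  rw [exp_smul_Qgen ha hb, add_mulVec, one_mulVec, smul_mulVec, Pi.add_apply, Pi.smul_apply,
    smul_eq_mul]

theorem Qgen_mulVec_sub (a b : ℝ) (g : Fin 2 → ℝ) :
    (Qgen a b *ᵥ g) 0 - (Qgen a b *ᵥ g) 1 = -(a + b) * (g 0 - g 1) := by
  simp only [Qgen, mulVec, dotProduct, Fin.sum_univ_two, of_apply, cons_val', cons_val_zero,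
    cons_val_one, cons_val_fin_one]
  ring

theorem exp_smul_Qgen_mulVec_sub {a b : ℝ} (ha : 0 ≤ a) (hb : 0 ≤ b) (s : ℝ)
    (g : Fin 2 → ℝ) : (NormedSpace.exp (s • Qgen a b) *ᵥ g) 0
      - (NormedSpace.exp (s • Qgen a b) *ᵥ g) 1 = Real.exp (-(a + b) * s) * (g 0 - g 1) := by
  have hcancel : (1 - Real.exp (-(a + b) * s)) / (a + b) * (a + b)
      = 1 - Real.exp (-(a + b) * s) :=
    div_mul_cancel_of_imp fun h => by simp [h]
  rw [exp_smul_Qgen_mulVec_apply ha hb, exp_smul_Qgen_mulVec_apply ha hb]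
  linear_combination (1 - Real.exp (-(a + b) * s)) / (a + b) * Qgen_mulVec_sub a b g
    + (g 1 - g 0) * hcancel

theorem dis19_mul_exp (r s : ℝ) :
    dis19 s * Real.exp (-r * s) = (Real.exp (-(1 + r) * s) + Real.exp (-(2 + r) * s)) / 2 := by
  rw [dis19, div_mul_eq_mul_div, add_mul, ← Real.exp_add, ← Real.exp_add]
  ring_nf

theorem integrableOn_dis19_mul_exp {r : ℝ} (hr : -1 < r) :
    IntegrableOn (fun s => dis19 s * Real.exp (-r * s)) (Ioi 0) := by
  simp_rw [dis19_mul_exp]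
  exact ((integrableOn_exp_mul_Ioi (by linarith) 0).add
    (integrableOn_exp_mul_Ioi (by linarith) 0)).div_const 2

theorem integral_dis19_mul_exp {r : ℝ} (hr : -1 < r) :
    ∫ s in Ioi 0, dis19 s * Real.exp (-r * s) = ((1 + r)⁻¹ + (2 + r)⁻¹) / 2 := by
  simp_rw [dis19_mul_exp]
  rw [integral_div, integral_add (integrableOn_exp_mul_Ioi (by linarith) 0)
    (integrableOn_exp_mul_Ioi (by linarith) 0), integral_exp_mul_Ioi (by linarith),
    integral_exp_mul_Ioi (by linarith)]
  simp only [mul_zero, Real.exp_zero, neg_div_neg_eq, one_div]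

theorem integrableOn_dis19_mul_exp_smul_Qgen_mulVec {a b : ℝ} (ha : 0 ≤ a) (hb : 0 ≤ b)
    (g : Fin 2 → ℝ) (i : Fin 2) :
    IntegrableOn (fun s => dis19 s * (NormedSpace.exp (s • Qgen a b) *ᵥ g) i) (Ioi 0) := by
  have h₀ := integrableOn_dis19_mul_exp (r := 0) (by norm_num)
  have hr := integrableOn_dis19_mul_exp (r := a + b) (by linarith)
  refine IntegrableOn.congr_fun ((h₀.mul_const (g i)).add
    ((h₀.sub hr).mul_const ((Qgen a b *ᵥ g) i / (a + b)))) (fun s _ => ?_) measurableSet_Ioi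
  simp only [Pi.add_apply, Pi.sub_apply, exp_smul_Qgen_mulVec_apply ha hb, neg_zero, zero_mul,
    Real.exp_zero, mul_one]
  ring

theorem Vab_zero_sub_Vab_one {a b : ℝ} (ha : 0 ≤ a) (hb : 0 ≤ b) :
    Vab a b 0 - Vab a b 1 = (g1 a - g2 b) * (((1 + (a + b))⁻¹ + (2 + (a + b))⁻¹) / 2) := by
  rw [Vab, Vab, ← integral_sub (integrableOn_dis19_mul_exp_smul_Qgen_mulVec ha hb _ 0)
    (integrableOn_dis19_mul_exp_smul_Qgen_mulVec ha hb _ 1)]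
  simp_rw [← mul_sub, exp_smul_Qgen_mulVec_sub ha hb, ← mul_assoc]
  rw [integral_mul_const, integral_dis19_mul_exp (by linarith), mul_comm]
  simp

theorem IsStdEquilibrium.fst_eq_zero_or_eq_one {a b : ℝ} (h : IsStdEquilibrium a b) :
    a = 0 ∨ a = 1 := by
  obtain ⟨ha, -, hbest, -⟩ := h
  refine eq_zero_or_eq_one_of_isMaxOn_mul_sub_mul_sqrt (m := -(Vab a b 0 - Vab a b 1))
    (k := 7 / 8) (by norm_num) ha fun u hu => ?_
  have hu_le := hbest u hu
  simp only [g1] at hu_le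
  linarith

theorem IsStdEquilibrium.snd_eq_zero_or_eq_one {a b : ℝ} (h : IsStdEquilibrium a b) :
    b = 0 ∨ b = 1 := by
  obtain ⟨-, hb, -, hbest⟩ := h
  have hflip : 1 - b = 0 ∨ 1 - b = 1 := by
    refine eq_zero_or_eq_one_of_isMaxOn_mul_sub_mul_sqrt (m := -(Vab a b 0 - Vab a b 1))
      (k := 1) one_pos ⟨by linarith [hb.2], by linarith [hb.1]⟩ fun u hu => ?_
    have hu_le := hbest (1 - u) ⟨by linarith [hu.2], by linarith [hu.1]⟩
    simp only [g2, sub_sub_cancel] at hu_le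
    linarith
  rcases hflip with hb1 | hb0
  · exact Or.inr (by linarith)
  · exact Or.inl (by linarith)

/-- in the two-state continuous-time example with `U = [0,1]`,
`δ(t) = (e^{-t}+e^{-2t})/2`, `g₁(u) = -(7/8)√u`, `g₂(u) = 19/9 - √(1-u)`, no standard
(deterministic feedback) equilibrium exists; in particular
`V^{(0,0)}(0,1) - V^{(0,0)}(0,2) = -5/6`. -/
theorem no_standard_equilibrium_example :
    (¬ ∃ a b : ℝ, IsStdEquilibrium a b) ∧ Vab 0 0 0 - Vab 0 0 1 = -(5 / 6) := by
  refine ⟨?_, by norm_num [Vab_zero_sub_Vab_one, g1, g2]⟩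
  rintro ⟨a, b, h⟩
  rcases h.fst_eq_zero_or_eq_one with rfl | rfl <;> rcases h.snd_eq_zero_or_eq_one with rfl | rfl
  · have hdev := h.2.2.2 1 ⟨zero_le_one, le_rfl⟩
    norm_num [Vab_zero_sub_Vab_one, g1, g2] at hdev
  · have hdev := h.2.2.1 1 ⟨zero_le_one, le_rfl⟩
    norm_num [Vab_zero_sub_Vab_one, g1, g2] at hdev
  · have hdev := h.2.2.2 1 ⟨zero_le_one, le_rfl⟩
    norm_num [Vab_zero_sub_Vab_one, g1, g2] at hdev
  · have hdev := h.2.2.1 0 ⟨le_rfl, zero_le_one⟩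
    norm_num [Vab_zero_sub_Vab_one, g1, g2] at hdev

end
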